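/- arXiv:1604.02714 — 2 statements merged into one kernel-verified Lean document; each statement's English description precedes it below -/
import Mathlib

section
/- Let A be an n×m binary matrix and Y_1, …, Y_t transpositions of columns such that c(AY_1Y_2⋯Y_t) < c(AY_2⋯Y_t) < ⋯ < c(AY_t) < c(A) in lexicographic order. Then r(AY_1Y_2⋯Y_t) < r(A) in lexicographic order. -/
/-!
Reading a binary word as a number is strictly monotone for the lexicographic order, so
`r` and `c` compare rows and columns lexicographically. A transposition of columns `u < v` lowers
`c` exactly when column `v` is lexicographically smaller than column `u`. In the first row where
these two columns differ, column `v` has a `0` and column `u` a `1`; the rows above are unchanged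
by the swap and this row becomes smaller, so the transposition also lowers `r`. Along the chain
`r` therefore strictly decreases at each step.
-/

/-- The value of a row of length `m` read as a binary number (most significant digit first). -/
def rowVal (m : ℕ) (row : Fin m → Bool) : ℕ :=
  ∑ j : Fin m, (row j).toNat * 2 ^ (m - 1 - (j : ℕ))

/-- `r(A)`: the tuple of row values of a binary matrix. -/
def rtup {n m : ℕ} (A : Fin n → Fin m → Bool) : Fin n → ℕ :=
  fun i => rowVal m (A i)

/-- `c(A)`: the tuple of column values of a binary matrix. -/
def ctup {n m : ℕ} (A : Fin n → Fin m → Bool) : Fin m → ℕ :=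
  fun j => rowVal n (fun i => A i j)

/-- `A ∼ B`: `B` is obtained from `A` by permuting rows and columns. -/
def MatEquiv {n m : ℕ} (A B : Fin n → Fin m → Bool) : Prop :=
  ∃ (ρ : Equiv.Perm (Fin n)) (σ : Equiv.Perm (Fin m)), ∀ i j, B i j = A (ρ i) (σ j)

/-- `A` is semi-canonical: both `r(A)` and `c(A)` are weakly increasing. -/
def SemiCanonical {n m : ℕ} (A : Fin n → Fin m → Bool) : Prop :=
  Monotone (rtup A) ∧ Monotone (ctup A)

/-- `A` is canonical: `r(A)` is the lexicographic minimum over the equivalence class of `A`. -/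
def Canonical {n m : ℕ} (A : Fin n → Fin m → Bool) : Prop :=
  ∀ B, MatEquiv A B → toLex (rtup A) ≤ toLex (rtup B)

open Function

lemma rowVal_succ {m : ℕ} (f : Fin (m + 1) → Bool) :
    rowVal (m + 1) f = (f 0).toNat * 2 ^ m + rowVal m (Fin.tail f) := by
  simp only [rowVal, Fin.sum_univ_succ, Fin.val_zero, Fin.val_succ, Fin.tail]
  congr 1
  refine Finset.sum_congr rfl fun k _ => ?_
  congr 2
  omega

lemma rowVal_lt_two_pow {m : ℕ} (f : Fin m → Bool) : rowVal m f < 2 ^ m := by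
  induction m with
  | zero => simp [rowVal]
  | succ m ih =>
    rw [rowVal_succ, pow_succ]
    have := ih (Fin.tail f)
    have := Bool.toNat_le (f 0)
    nlinarith

lemma rowVal_strictMono {m : ℕ} : StrictMono fun f : Lex (Fin m → Bool) => rowVal m (ofLex f) := by
  induction m with
  | zero => rintro f g ⟨j, -⟩; exact j.elim0
  | succ m ih =>
    rintro f g ⟨j, hpre, hj⟩
    simp only [rowVal_succ]
    cases j using Fin.cases with
    | zero =>
      obtain ⟨hf, hg⟩ := Bool.lt_iff.1 hj
      simp only [Pi.ofLex_apply, hf, hg, Bool.toNat_false, Bool.toNat_true]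
      have := rowVal_lt_two_pow (Fin.tail (ofLex f))
      omega
    | succ j =>
      have head : f 0 = g 0 := hpre 0 (Fin.succ_pos j)
      have tail : toLex (Fin.tail (ofLex f)) < toLex (Fin.tail (ofLex g)) :=
        ⟨j, fun k hk => hpre k.succ (Fin.succ_lt_succ_iff.2 hk), hj⟩
      simp only [Pi.ofLex_apply, head]
      exact Nat.add_lt_add_left (ih tail) _

lemma rowVal_lt_rowVal_iff {m : ℕ} {f g : Fin m → Bool} :
    rowVal m f < rowVal m g ↔ toLex f < toLex g :=
  rowVal_strictMono.lt_iff_lt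

lemma lt_of_toLex_comp_swap_lt {ι α : Type*} [LinearOrder ι] [LinearOrder α] {f : ι → α}
    {u v : ι} (huv : u ≤ v) (h : toLex (f ∘ Equiv.swap u v) < toLex f) : f v < f u := by
  by_contra! hle
  rcases hle.eq_or_lt with heq | hlt
  · have hfix : f ∘ Equiv.swap u v = f := funext (Equiv.apply_swap_eq_self heq)
    exact lt_irrefl _ (hfix ▸ h)
  · have hback : toLex (f ∘ Equiv.swap u v ∘ Equiv.swap u v) < toLex (f ∘ Equiv.swap u v) :=
      Pi.lex_desc (f := f ∘ Equiv.swap u v) huv (by simpa using hlt)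
    rw [← Equiv.coe_trans, Equiv.swap_swap, Equiv.coe_refl, comp_id] at hback
    exact lt_asymm h hback

lemma rtup_comp_swap_lt {n m : ℕ} {Q : Fin n → Fin m → Bool} {u v : Fin m} (huv : u ≤ v)
    (h : ctup Q v < ctup Q u) : toLex (rtup fun i => Q i ∘ Equiv.swap u v) < toLex (rtup Q) := by
  obtain ⟨i, habove, hi⟩ := rowVal_lt_rowVal_iff.1 h
  refine ⟨i, fun k hk => ?_, rowVal_lt_rowVal_iff.2 (Pi.lex_desc huv hi)⟩
  have hfix : Q k ∘ Equiv.swap u v = Q k := funext (Equiv.apply_swap_eq_self (habove k hk).symm)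
  simp only [Pi.toLex_apply, rtup, hfix]

lemma rtup_lt_of_ctup_lt_of_swap_cols {n m : ℕ} {P Q : Fin n → Fin m → Bool} {u v : Fin m}
    (hPQ : ∀ i j, P i j = Q i (Equiv.swap u v j)) (hc : toLex (ctup P) < toLex (ctup Q)) :
    toLex (rtup P) < toLex (rtup Q) := by
  wlog huv : u ≤ v generalizing u v
  · exact this (by simpa only [Equiv.swap_comm] using hPQ) (le_of_not_ge huv)
  obtain rfl : P = fun i => Q i ∘ Equiv.swap u v := funext fun i => funext (hPQ i)
  exact rtup_comp_swap_lt huv (lt_of_toLex_comp_swap_lt huv hc)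

/-- `B k` models `A Y_{k+1} ⋯ Y_t`, so `B 0 = A Y_1 ⋯ Y_t` and `B (Fin.last t) = A`. -/
theorem chain_col_transpositions {n m t : ℕ} (ht : 0 < t)
    (A : Fin n → Fin m → Bool) (B : Fin (t + 1) → Fin n → Fin m → Bool)
    (hlast : B (Fin.last t) = A)
    (hswap : ∀ k : Fin t, ∃ u v : Fin m, u ≠ v ∧
      ∀ i j, B k.castSucc i j = B k.succ i (Equiv.swap u v j))
    (hchain : ∀ k : Fin t, toLex (ctup (B k.castSucc)) < toLex (ctup (B k.succ))) :
    toLex (rtup (B 0)) < toLex (rtup A) := by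
  have hmono : StrictMono fun k => toLex (rtup (B k)) :=
    Fin.strictMono_iff_lt_succ.2 fun k => by
      obtain ⟨u, v, -, hk⟩ := hswap k
      exact rtup_lt_of_ctup_lt_of_swap_cols hk (hchain k)
  have h0 : (0 : Fin (t + 1)) < Fin.last t := Fin.lt_def.2 ht
  rw [← hlast]
  exact hmono h0
end

section
/- If A is a canonical n×m binary matrix with first-row value x_1, then x_1 = 2^s − 1 where s = ε_1(A) is the number of 1's in the first row of A. -/
/-!
A row with `s` ones has value at least `2 ^ s - 1`, attained when the ones occupy the last
`s` columns. Permuting the columns so that the first row becomes sorted yields an equivalent matrix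
whose first row has value `2 ^ s - 1`; since the lexicographic order compares first rows first,
canonicity gives `x₁ ≤ 2 ^ s - 1`.
-/

lemma rowVal_succ_s16 (m : ℕ) (row : Fin (m + 1) → Bool) :
    rowVal (m + 1) row =
      2 * rowVal m (fun j => row j.castSucc) + (row (Fin.last m)).toNat := by
  rw [rowVal, rowVal, Fin.sum_univ_castSucc, Finset.mul_sum]
  congr 1
  · refine Finset.sum_congr rfl fun j _ => ?_
    rw [show m + 1 - 1 - (j.castSucc : ℕ) = m - 1 - j + 1 by simp; omega]
    ring
  · simp

lemma two_pow_ones_le_rowVal_add_one (m : ℕ) (row : Fin m → Bool) :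
    2 ^ (∑ j, (row j).toNat) ≤ rowVal m row + 1 := by
  induction m with
  | zero => simp [rowVal]
  | succ m ih =>
    have hinit := ih fun j => row j.castSucc
    rw [rowVal_succ_s16, Fin.sum_univ_castSucc]
    cases row (Fin.last m) <;> simp only [Bool.toNat_false, Bool.toNat_true, add_zero, pow_succ] <;>
      omega

lemma rowVal_of_monotone (m : ℕ) (row : Fin m → Bool) (hrow : Monotone row) :
    rowVal m row = 2 ^ (∑ j, (row j).toNat) - 1 := by
  induction m with
  | zero => simp [rowVal]
  | succ m ih =>
    have hinit := ih (fun j => row j.castSucc) (hrow.comp Fin.strictMono_castSucc.monotone)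
    have hpos : 1 ≤ 2 ^ ∑ j : Fin m, (row j.castSucc).toNat := Nat.one_le_two_pow
    rw [rowVal_succ_s16, Fin.sum_univ_castSucc, hinit]
    cases hlast : row (Fin.last m)
    · have hzero : ∑ j : Fin m, (row j.castSucc).toNat = 0 :=
        Finset.sum_eq_zero fun j _ => by
          have hj := hrow (Fin.castSucc_lt_last j).le
          rw [hlast] at hj
          simp [le_bot_iff.mp hj]
      simp [hzero]
    · simp only [Bool.toNat_true, pow_succ]
      omega

theorem canonical_first_row_value {n m : ℕ} (A : Fin (n + 1) → Fin m → Bool)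
    (hA : Canonical A) :
    rtup A 0 = 2 ^ (∑ j : Fin m, (A 0 j).toNat) - 1 := by
  let σ := Tuple.sort (A 0)
  have hle : rtup A 0 ≤ rowVal m (fun j => A 0 (σ j)) :=
    Pi.apply_le_of_toLex (hA (fun i j => A i (σ j)) ⟨Equiv.refl _, σ, fun _ _ => rfl⟩)
      fun j hj => absurd hj (Fin.not_lt_zero j)
  have hsorted : rowVal m (fun j => A 0 (σ j)) = 2 ^ (∑ j : Fin m, (A 0 j).toNat) - 1 := by
    rw [rowVal_of_monotone m (fun j => A 0 (σ j)) (Tuple.monotone_sort (A 0)),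
      Equiv.sum_comp σ fun j => (A 0 j).toNat]
  have hlow : 2 ^ (∑ j : Fin m, (A 0 j).toNat) ≤ rtup A 0 + 1 :=
    two_pow_ones_le_rowVal_add_one m (A 0)
  omega
end
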